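/- There exists a bounded Baire class 1 function f : [0,1] → ℝ with L_f = T if and only if: T is compact, T(x) = {y : (x,y) ∈ T} is nonempty for every x ∈ [0,1], and the set D = {x : T(x) has more than one element} is meager in [0,1]. -/

import Mathlib

open Set Filter Topology Metric

noncomputable section

/-- The graph of `f` restricted to the set `A`, as a subset of `ℝ × ℝ`. -/
def graphOn (A : Set ℝ) (f : ℝ → ℝ) : Set (ℝ × ℝ) :=
  {p : ℝ × ℝ | p.1 ∈ A ∧ p.2 = f p.1}

/-- The set of accumulation points of a set `G ⊆ ℝ × ℝ`. -/
def accPts (G : Set (ℝ × ℝ)) : Set (ℝ × ℝ) :=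
  {p : ℝ × ℝ | AccPt p (𝓟 G)}

/-- Baire class 1 on `[0,1]`: pointwise limit of continuous functions. -/
def Baire1 (f : ℝ → ℝ) : Prop :=
  ∃ g : ℕ → ℝ → ℝ, (∀ n, ContinuousOn (g n) (Icc 0 1)) ∧
    ∀ x ∈ Icc (0:ℝ) 1, Tendsto (fun n => g n x) atTop (𝓝 (f x))

/-- Baire class 2 on `[0,1]`: pointwise limit of Baire class 1 functions. -/
def Baire2 (f : ℝ → ℝ) : Prop :=
  ∃ g : ℕ → ℝ → ℝ, (∀ n, Baire1 (g n)) ∧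
    ∀ x ∈ Icc (0:ℝ) 1, Tendsto (fun n => g n x) atTop (𝓝 (f x))

/-- A set is meager relative to the subspace `[0,1]`. -/
def MeagreIn01 (D : Set ℝ) : Prop :=
  IsMeagre ((↑) ⁻¹' D : Set (Icc (0:ℝ) 1))

/-- Embedding of the plane into `ℝ × ℝ̄` (extended reals in the second coordinate). -/
def embedE (p : ℝ × ℝ) : ℝ × EReal := (p.1, (p.2 : EReal))

/-!
Necessity. The accumulation set of a bounded graph is closed and bounded, and by compactness
every `x ∈ [0,1]` carries an accumulation point. At a point where `f|[0,1]` is continuous the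
only accumulation point above `x` is `(x, f x)`, and a pointwise limit of continuous functions
is continuous outside a meagre set.

Sufficiency. The lower envelope `m x = min T(x)` is lower semicontinuous, so its preimages of
open intervals are Fσ. Take a sequence `q n ∈ T` of which every point of `T` is a cluster point,
and distinct points `pts n ∈ [0,1] \ D` with `|pts n - (q n).1| < 1/(n+1)`; they exist because
`D` is meagre. Redefining `m` at `pts n` as `(q n).2` gives a bounded `f` whose graph accumulates
exactly on `T`. Since `pts n ∉ D`, the fibre of `T` over `pts n` is `{m (pts n)}`, and this keeps
the preimages of open intervals under `f` Fσ. By Lebesgue–Hausdorff, such a bounded function is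
a uniform limit of step functions on disjoint Fσ pieces of `[0,1]`, hence of Baire class one.
-/

open Function

def IsFσ {X : Type*} [TopologicalSpace X] (s : Set X) : Prop :=
  IsGδ sᶜ

section IsFσ

variable {X : Type*} [TopologicalSpace X] {s t : Set X}

lemma IsClosed.isFσ (hs : IsClosed s) : IsFσ s :=
  hs.isOpen_compl.isGδ

lemma IsOpen.isFσ [PerfectlyNormalSpace X] (hs : IsOpen s) : IsFσ s :=
  hs.isClosed_compl.isGδ

lemma IsFσ.union (hs : IsFσ s) (ht : IsFσ t) : IsFσ (s ∪ t) := by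
  rw [IsFσ, compl_union]; exact hs.inter ht

lemma IsFσ.inter (hs : IsFσ s) (ht : IsFσ t) : IsFσ (s ∩ t) := by
  rw [IsFσ, compl_inter]; exact IsGδ.union hs ht

lemma IsFσ.iUnion {ι : Sort*} [Countable ι] {s : ι → Set X} (hs : ∀ i, IsFσ (s i)) :
    IsFσ (⋃ i, s i) := by
  rw [IsFσ, compl_iUnion]; exact .iInter hs

lemma Set.Countable.isFσ [T1Space X] (hs : s.Countable) : IsFσ s :=
  hs.isGδ_compl

lemma IsFσ.exists_monotone_isClosed (hs : IsFσ s) :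
    ∃ F : ℕ → Set X, (∀ n, IsClosed (F n)) ∧ Monotone F ∧ ⋃ n, F n = s := by
  obtain ⟨U, hU, hsU⟩ := isGδ_iff_eq_iInter_nat.1 hs
  refine ⟨accumulate fun n => (U n)ᶜ, fun n => ?_, monotone_accumulate, ?_⟩
  · rw [accumulate_def]
    exact (finite_Iic n).isClosed_biUnion fun k _ => (hU k).isClosed_compl
  · rw [iUnion_accumulate, ← compl_iInter, ← hsU, compl_compl]

end IsFσ

section Baire1

lemma Baire1.congr {f g : ℝ → ℝ} (hf : Baire1 f) (hfg : EqOn f g (Icc 0 1)) : Baire1 g := by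
  obtain ⟨u, hu, hlim⟩ := hf
  exact ⟨u, hu, fun x hx => hfg hx ▸ hlim x hx⟩

lemma Baire1.add {f g : ℝ → ℝ} (hf : Baire1 f) (hg : Baire1 g) : Baire1 (f + g) := by
  obtain ⟨u, hu, hulim⟩ := hf
  obtain ⟨v, hv, hvlim⟩ := hg
  exact ⟨u + v, fun n => (hu n).add (hv n), fun x hx => (hulim x hx).add (hvlim x hx)⟩

lemma Baire1.sub {f g : ℝ → ℝ} (hf : Baire1 f) (hg : Baire1 g) : Baire1 (f - g) := by
  obtain ⟨u, hu, hulim⟩ := hf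
  obtain ⟨v, hv, hvlim⟩ := hg
  exact ⟨u - v, fun n => (hu n).sub (hv n), fun x hx => (hulim x hx).sub (hvlim x hx)⟩

lemma Baire1.sum {ι : Type*} (s : Finset ι) {f : ι → ℝ → ℝ} (hf : ∀ i ∈ s, Baire1 (f i)) :
    Baire1 fun x => ∑ i ∈ s, f i x := by
  choose! u hu hlim using hf
  exact ⟨fun n x => ∑ i ∈ s, u i n x, fun n => continuousOn_finsetSum s fun i hi => hu i hi n,
    fun x hx => tendsto_finsetSum s fun i hi => hlim i hi x hx⟩

lemma Baire1.exists_bounded_approx {f : ℝ → ℝ} {b : ℝ} (hf : Baire1 f)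
    (hb : ∀ x ∈ Icc (0:ℝ) 1, |f x| ≤ b) :
    ∃ u : ℕ → ℝ → ℝ, (∀ n, ContinuousOn (u n) (Icc 0 1)) ∧ (∀ n x, |u n x| ≤ b) ∧
      ∀ x ∈ Icc (0:ℝ) 1, Tendsto (fun n => u n x) atTop (𝓝 (f x)) := by
  obtain ⟨u, hu, hlim⟩ := hf
  have hb0 : 0 ≤ b := (abs_nonneg _).trans (hb 0 ⟨le_rfl, zero_le_one⟩)
  let clamp : ℝ → ℝ := fun y => max (-b) (min b y)
  have hclamp : Continuous clamp := continuous_const.max (continuous_const.min continuous_id)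
  refine ⟨fun n => clamp ∘ u n, fun n => hclamp.comp_continuousOn (hu n),
    fun n x => abs_le.2 ⟨le_max_left _ _, max_le (by linarith) (min_le_left _ _)⟩,
    fun x hx => ?_⟩
  have hfx : clamp (f x) = f x := by
    obtain ⟨h₁, h₂⟩ := abs_le.1 (hb x hx)
    simp only [clamp, min_eq_right h₂, max_eq_right h₁]
  exact hfx ▸ (hclamp.tendsto _).comp (hlim x hx)

lemma Baire1.tsum {d : ℕ → ℝ → ℝ} {β : ℕ → ℝ} (hd : ∀ k, Baire1 (d k)) (hβ : Summable β)
    (hdβ : ∀ k, ∀ x ∈ Icc (0:ℝ) 1, |d k x| ≤ β k) : Baire1 fun x => ∑' k, d k x := by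
  choose u hu hub hlim using fun k => (hd k).exists_bounded_approx (hdβ k)
  refine ⟨fun n x => ∑' k, u k n x, fun n => continuousOn_tsum (fun k => hu k n) hβ
    fun k x _ => hub k n x, fun x hx => ?_⟩
  exact tendsto_tsum_of_dominated_convergence hβ (fun k => hlim k x hx)
    (Eventually.of_forall fun n k => hub k n x)

lemma baire1_of_forall_uniform_approx {f : ℝ → ℝ}
    (h : ∀ δ > 0, ∃ g, Baire1 g ∧ ∀ x ∈ Icc (0:ℝ) 1, |g x - f x| ≤ δ) : Baire1 f := by
  choose v hv hvf using fun k : ℕ => h ((1 / 2) ^ k) (by positivity)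
  let d : ℕ → ℝ → ℝ := fun k => v (k + 1) - v k
  have hd : ∀ k, ∀ x ∈ Icc (0:ℝ) 1, |d k x| ≤ 2 * (1 / 2) ^ k := fun k x hx => by
    have h₁ := hvf (k + 1) x hx
    have h₂ := hvf k x hx
    rw [pow_succ] at h₁
    have : (0:ℝ) ≤ (1 / 2) ^ k := by positivity
    calc |d k x| = |(v (k + 1) x - f x) - (v k x - f x)| := by simp only [d, Pi.sub_apply]; ring_nf
      _ ≤ |v (k + 1) x - f x| + |v k x - f x| := abs_sub _ _
      _ ≤ 2 * (1 / 2) ^ k := by linarith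
  have hβ : Summable fun k : ℕ => 2 * (1 / 2 : ℝ) ^ k := summable_geometric_two.mul_left 2
  refine ((hv 0).add ((Baire1.tsum (fun k => (hv (k + 1)).sub (hv k)) hβ hd))).congr
    fun x hx => ?_
  have hsum : Summable fun k => d k x :=
    hβ.of_norm_bounded fun k => (Real.norm_eq_abs _).trans_le (hd k x hx)
  have hvlim : Tendsto (fun n => v n x) atTop (𝓝 (f x)) := by
    rw [tendsto_iff_norm_sub_tendsto_zero]
    exact squeeze_zero (fun n => norm_nonneg _) (fun n => hvf n x hx)
      (tendsto_pow_atTop_nhds_zero_of_lt_one (by norm_num) (by norm_num))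
  have htel : Tendsto (fun n => ∑ k ∈ Finset.range n, d k x) atTop (𝓝 (f x - v 0 x)) := by
    simpa only [d, Pi.sub_apply, Finset.sum_range_sub (fun k => v k x)] using
      hvlim.sub_const (v 0 x)
  have := tendsto_nhds_unique hsum.hasSum.tendsto_sum_nat htel
  simp only [Pi.add_apply, d] at this ⊢
  rw [this]; ring

lemma Baire1.indicator_const {A : Set ℝ} (hA : IsFσ A) (hA' : IsFσ (Icc 0 1 \ A)) (c : ℝ) :
    Baire1 (A.indicator fun _ => c) := by
  obtain ⟨F, hFc, hFm, hFA⟩ := hA.exists_monotone_isClosed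
  obtain ⟨G, hGc, hGm, hGA⟩ := hA'.exists_monotone_isClosed
  have hdisj : ∀ n, Disjoint (G n) (F n) := fun n => Set.disjoint_left.2 fun x hxG hxF =>
    ((hGA ▸ subset_iUnion G n) hxG).2 ((hFA ▸ subset_iUnion F n) hxF)
  choose u hu0 hu1 _ using fun n => exists_continuous_zero_one_of_isClosed (hGc n) (hFc n) (hdisj n)
  refine ⟨fun n x => c * u n x, fun n => (continuous_const.mul (u n).continuous).continuousOn,
    fun x hx => tendsto_const_nhds.congr' ?_⟩
  by_cases hxA : x ∈ A
  · obtain ⟨N, hN⟩ := mem_iUnion.1 (hFA ▸ hxA)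
    filter_upwards [eventually_ge_atTop N] with n hn
    rw [indicator_of_mem hxA, hu1 n (hFm hn hN), Pi.one_apply, mul_one]
  · obtain ⟨N, hN⟩ := mem_iUnion.1 (hGA ▸ ⟨hx, hxA⟩ : x ∈ ⋃ n, G n)
    filter_upwards [eventually_ge_atTop N] with n hn
    rw [indicator_of_notMem hxA, hu0 n (hGm hn hN), Pi.zero_apply, mul_zero]

end Baire1

section LebesgueHausdorff

lemma exists_isFσ_disjoint_refinement {X : Type*} [TopologicalSpace X] [PerfectlyNormalSpace X]
    {ι : Type*} [Countable ι] {E : ι → Set X} (hE : ∀ i, IsFσ (E i)) :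
    ∃ H : ι → Set X, (∀ i, IsFσ (H i)) ∧ (∀ i, H i ⊆ E i) ∧ Pairwise (Disjoint on H) ∧
      ⋃ i, H i = ⋃ i, E i := by
  rcases isEmpty_or_nonempty ι with hι | hι
  · exact ⟨E, hE, fun _ => subset_rfl, fun i => isEmptyElim i, rfl⟩
  choose F hFc _ hFE using fun i => (hE i).exists_monotone_isClosed
  obtain ⟨e, he⟩ := exists_surjective_nat (ι × ℕ)
  let G : ℕ → Set X := fun k => F (e k).1 (e k).2
  have hGE : ∀ k, G k ⊆ E (e k).1 := fun k => hFE (e k).1 ▸ subset_iUnion (F (e k).1) _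
  refine ⟨fun i => ⋃ (k) (_ : (e k).1 = i), disjointed G k, fun i => ?_, fun i => ?_,
    fun i j hij => ?_, ?_⟩
  · refine .iUnion fun k => .iUnion fun _ => ?_
    rw [disjointed_eq_inter_compl]
    exact (hFc _ _).isFσ.inter
      ((finite_Iio k).isOpen_biInter fun j _ => (hFc _ _).isOpen_compl).isFσ
  · exact iUnion₂_subset fun k hk => hk ▸ (disjointed_subset G k).trans (hGE k)
  · simp only [Function.onFun, disjoint_iUnion₂_left, disjoint_iUnion₂_right]
    rintro k rfl l rfl
    exact disjoint_disjointed G fun hkl => hij (hkl ▸ rfl)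
  · calc ⋃ i, ⋃ (k) (_ : (e k).1 = i), disjointed G k = ⋃ k, disjointed G k := by
          ext x; simp
      _ = ⋃ p : ι × ℕ, F p.1 p.2 := by rw [iUnion_disjointed, he.iUnion_comp (fun p => F p.1 p.2)]
      _ = ⋃ i, E i := by rw [iUnion_prod']; simp only [hFE]

lemma baire1_sum_indicator {ι : Type*} [Fintype ι] {H : ι → Set ℝ} (hH : ∀ i, IsFσ (H i))
    (hdisj : Pairwise (Disjoint on H)) (hcover : ⋃ i, H i = Icc 0 1) (c : ι → ℝ) :
    Baire1 fun x => ∑ i, (H i).indicator (fun _ => c i) x := by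
  refine Baire1.sum _ fun i _ => Baire1.indicator_const (hH i) ?_ (c i)
  have hcompl : Icc 0 1 \ H i = ⋃ (j) (_ : j ≠ i), H j := by
    rw [← hcover]
    ext x
    simp only [Set.mem_sdiff, mem_iUnion]
    constructor
    · rintro ⟨⟨j, hj⟩, hi⟩
      exact ⟨j, fun hji => hi (hji ▸ hj), hj⟩
    · rintro ⟨j, hji, hj⟩
      exact ⟨⟨j, hj⟩, disjoint_left.1 (hdisj hji) hj⟩
  rw [hcompl]
  exact .iUnion fun j => .iUnion fun _ => hH j

theorem baire1_of_isFσ_preimage {f : ℝ → ℝ} (hbdd : Bornology.IsBounded (f '' Icc 0 1))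
    (hf : ∀ p q, IsFσ (Icc 0 1 ∩ f ⁻¹' Ioo p q)) : Baire1 f := by
  refine baire1_of_forall_uniform_approx fun δ hδ => ?_
  obtain ⟨t, -, htfin, hcover⟩ := finite_cover_balls_of_compact hbdd.isCompact_closure hδ
  lift t to Finset ℝ using htfin
  obtain ⟨H, hHσ, hHE, hdisj, hHcover⟩ := exists_isFσ_disjoint_refinement
    (E := fun y : t => Icc 0 1 ∩ f ⁻¹' ball y δ) fun y => by rw [Real.ball_eq_Ioo]; exact hf _ _
  have hHIcc : ⋃ y, H y = Icc 0 1 := by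
    rw [hHcover, ← inter_iUnion, inter_eq_left]
    intro x hx
    obtain ⟨y, hy, hxy⟩ := mem_iUnion₂.1 (hcover (subset_closure (mem_image_of_mem f hx)))
    exact mem_iUnion.2 ⟨⟨y, hy⟩, hxy⟩
  refine ⟨_, baire1_sum_indicator hHσ hdisj hHIcc (↑), fun x hx => ?_⟩
  obtain ⟨y, hy⟩ := mem_iUnion.1 (hHIcc ▸ hx : x ∈ ⋃ y, H y)
  rw [Finset.sum_eq_single y (fun z _ hzy => indicator_of_notMem
    (fun hz => disjoint_left.1 (hdisj hzy) hz hy) _) (by simp), indicator_of_mem hy,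
    ← Real.dist_eq, dist_comm]
  exact (mem_ball.1 (hHE y hy).2).le

end LebesgueHausdorff

section AccumulationPoints

variable {X : Type*}

lemma accPt_of_mapClusterPt [TopologicalSpace X] {ι : Type*} {l : Filter ι} {v : ι → X}
    {C : Set X} {p : X} (hp : MapClusterPt p l v) (hv : ∀ᶠ i in l, v i ∈ C ∧ v i ≠ p) :
    AccPt p (𝓟 C) :=
  accPt_principal_iff_clusterPt.2 (ClusterPt.mono hp (tendsto_principal.2 hv :
    Tendsto v l (𝓟 (C \ {p}))))

lemma accPt_range_of_mapClusterPt [MetricSpace X] {P q : ℕ → X} {t : X}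
    (ht : MapClusterPt t atTop q) (hPq : Tendsto (fun n => dist (P n) (q n)) atTop (𝓝 0))
    (hP : Injective P) : AccPt t (𝓟 (range P)) := by
  obtain ⟨ψ, hψ, hqψ⟩ := ht.tendsto_subseq
  have hPψ : Tendsto (P ∘ ψ) atTop (𝓝 t) := tendsto_of_tendsto_of_dist hqψ
    ((hPq.comp hψ.tendsto_atTop).congr fun n => dist_comm _ _)
  have hhit : {n | P (ψ n) = t}.Subsingleton := fun m hm n hn =>
    (hP.comp hψ.injective) (hm.trans hn.symm)
  refine accPt_of_mapClusterPt hPψ.mapClusterPt ?_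
  filter_upwards [Nat.cofinite_eq_atTop ▸ hhit.finite.eventually_cofinite_notMem] with n hn
  exact ⟨mem_range_self _, hn⟩

lemma derivedSet_range_subset_of_tendsto_dist [MetricSpace X] {ι : Type*} {P q : ι → X}
    {T : Set X} (hT : IsClosed T) (hq : ∀ i, q i ∈ T)
    (hPq : Tendsto (fun i => dist (P i) (q i)) cofinite (𝓝 0)) : derivedSet (range P) ⊆ T := by
  intro x hx
  rw [← hT.closure_eq, closure_eq_iInter_cthickening]
  refine mem_iInter₂.2 fun δ hδ => ?_
  have hfar : {i | ¬ dist (P i) (q i) < δ}.Finite := eventually_cofinite.1 (hPq (Iio_mem_nhds hδ))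
  have hsub : range P ⊆ P '' {i | ¬ dist (P i) (q i) < δ} ∪ cthickening δ T := by
    rintro _ ⟨i, rfl⟩
    by_cases hi : dist (P i) (q i) < δ
    · exact Or.inr (mem_cthickening_of_dist_le _ _ _ _ (hq i) hi.le)
    · exact Or.inl (mem_image_of_mem P hi)
  have hx' := derivedSet_mono _ _ hsub hx
  rw [derivedSet_union] at hx'
  rcases hx' with h | h
  · exact absurd (hfar.image P) (Set.Infinite.of_accPt h)
  · exact isClosed_cthickening.closure_subset (derivedSet_subset_closure _ h)

end AccumulationPoints

section Meagre

variable {X : Type*} [TopologicalSpace X]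

lemma Set.Countable.isMeagre [T1Space X] [PerfectSpace X] {s : Set X} (hs : s.Countable) :
    IsMeagre s := by
  rw [← biUnion_of_singleton s]
  exact isMeagre_biUnion hs fun x _ =>
    (isClosed_singleton.isNowhereDense_iff.2 (interior_singleton x)).isMeagre

lemma IsOpen.infinite_diff_of_isMeagre [BaireSpace X] [T1Space X] [PerfectSpace X] {U C : Set X}
    (hU : IsOpen U) (hne : U.Nonempty) (hC : IsMeagre C) : (U \ C).Infinite := by
  intro hfin
  exact not_isMeagre_of_isOpen hU hne
    ((hfin.countable.isMeagre.union hC).mono (subset_sdiff_union U C))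

lemma isMeagre_compl_iUnion_interior {F : ℕ → Set X} (hF : ∀ n, IsClosed (F n))
    (hcover : ⋃ n, F n = univ) : IsMeagre (⋃ n, interior (F n))ᶜ := by
  refine (isMeagre_iUnion fun n =>
    (isClosed_frontier.isNowhereDense_iff.2 (interior_frontier (hF n))).isMeagre).mono ?_
  intro x hx
  obtain ⟨n, hn⟩ := mem_iUnion.1 (hcover.symm ▸ mem_univ x : x ∈ ⋃ n, F n)
  rw [mem_iUnion]
  exact ⟨n, (hF n).frontier_eq ▸ ⟨hn, fun h => hx (mem_iUnion.2 ⟨n, h⟩)⟩⟩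

lemma isMeagre_setOf_not_continuousAt {φ : X → ℝ} {ψ : ℕ → X → ℝ} (hψ : ∀ n, Continuous (ψ n))
    (hlim : ∀ x, Tendsto (fun n => ψ n x) atTop (𝓝 (φ x))) :
    IsMeagre {x | ¬ContinuousAt φ x} := by
  let F : ℝ → ℕ → Set X := fun ε N => {x | ∀ m ≥ N, dist (ψ m x) (ψ N x) ≤ ε}
  have hFc : ∀ ε N, IsClosed (F ε N) := fun ε N => by
    simp only [F, ofPred_forall]
    exact isClosed_iInter fun m => isClosed_iInter fun _ =>
      isClosed_le ((hψ m).dist (hψ N)) continuous_const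
  have hFcover : ∀ ε > 0, ⋃ N, F ε N = univ := fun ε hε => eq_univ_of_forall fun x => by
    obtain ⟨N, hN⟩ := Metric.cauchySeq_iff'.1 (hlim x).cauchySeq ε hε
    exact mem_iUnion.2 ⟨N, fun m hm => (hN m hm).le⟩
  have hFφ : ∀ ε N x, x ∈ F ε N → dist (φ x) (ψ N x) ≤ ε := fun ε N x hx =>
    le_of_tendsto ((hlim x).dist tendsto_const_nhds) ((eventually_ge_atTop N).mono hx)
  refine (isMeagre_iUnion fun k : ℕ => isMeagre_compl_iUnion_interior (hFc (1 / (k + 1)))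
    (hFcover _ Nat.one_div_pos_of_nat)).mono fun x hx => by_contra fun hx' => hx ?_
  have h : ∀ k : ℕ, ∃ N, x ∈ interior (F (1 / (k + 1)) N) := fun k => by
    by_contra hk
    exact hx' (mem_iUnion.2 ⟨k, fun hxk => hk (mem_iUnion.1 hxk)⟩)
  refine continuousAt_of_locally_uniform_approx_of_continuousAt fun u hu => ?_
  obtain ⟨ε, hε, hεu⟩ := mem_uniformity_dist.1 hu
  obtain ⟨k, hk⟩ := exists_nat_one_div_lt hε
  obtain ⟨N, hN⟩ := h k
  exact ⟨_, isOpen_interior.mem_nhds hN, ψ N, (hψ N).continuousAt,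
    fun y hy => hεu ((hFφ _ N y (interior_subset hy)).trans_lt hk)⟩

end Meagre

def nontrivialFibers (T : Set (ℝ × ℝ)) : Set ℝ :=
  {x | ∃ y z : ℝ, (x, y) ∈ T ∧ (x, z) ∈ T ∧ y ≠ z}

section Necessity

variable {f : ℝ → ℝ}

lemma eq_of_mem_closure_graphOn {s : Set ℝ} {x w : ℝ} (hf : ContinuousWithinAt f s x)
    (hxw : (x, w) ∈ closure (graphOn s f)) : w = f x := by
  obtain ⟨p, hp, hlim⟩ := mem_closure_iff_seq_limit.1 hxw
  have hfst : Tendsto (fun n => (p n).1) atTop (𝓝[s] x) := tendsto_nhdsWithin_iff.2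
    ⟨(continuous_fst.tendsto _).comp hlim, Eventually.of_forall fun n => (hp n).1⟩
  exact tendsto_nhds_unique ((continuous_snd.tendsto _).comp hlim)
    ((hf.tendsto.comp hfst).congr fun n => ((hp n).2).symm)

lemma isBounded_graphOn (hf : Bornology.IsBounded (f '' Icc 0 1)) :
    Bornology.IsBounded (graphOn (Icc 0 1) f) :=
  ((isBounded_Icc 0 1).prod hf).subset fun p hp => ⟨hp.1, p.1, hp.1, hp.2.symm⟩

lemma isCompact_accPts_graphOn (hf : Bornology.IsBounded (f '' Icc 0 1)) :
    IsCompact (accPts (graphOn (Icc 0 1) f)) :=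
  (isBounded_graphOn hf).isCompact_closure.of_isClosed_subset (isClosed_derivedSet _)
    (derivedSet_subset_closure _)

lemma exists_mem_accPts_graphOn (hf : Bornology.IsBounded (f '' Icc 0 1)) {x : ℝ}
    (hx : x ∈ Icc (0:ℝ) 1) : ∃ y, (x, y) ∈ accPts (graphOn (Icc 0 1) f) := by
  let v : Icc (0:ℝ) 1 → ℝ × ℝ := fun u => (u, f u)
  obtain ⟨⟨a, b⟩, -, hp⟩ := (isBounded_graphOn hf).isCompact_closure.exists_clusterPt
    (f := map v (𝓝[≠] ⟨x, hx⟩))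
    (tendsto_principal.2 (Eventually.of_forall fun u => subset_closure ⟨u.2, rfl⟩))
  have hval : Tendsto (fun u : Icc (0:ℝ) 1 => (u : ℝ)) (𝓝[≠] ⟨x, hx⟩) (𝓝 x) :=
    continuous_subtype_val.continuousAt.tendsto.mono_left nhdsWithin_le_nhds
  have ha : a = x :=
    eq_of_nhds_neBot (ClusterPt.mono (MapClusterPt.continuousAt_comp (u := v)
      continuous_fst.continuousAt hp) hval)
  subst ha
  refine ⟨b, accPt_of_mapClusterPt hp (eventually_nhdsWithin_of_forall fun u hu => ?_)⟩
  exact ⟨⟨u.2, rfl⟩, fun h => hu (Subtype.ext (congrArg Prod.fst h))⟩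

lemma meagreIn01_nontrivialFibers_accPts (hf : Baire1 f) :
    MeagreIn01 (nontrivialFibers (accPts (graphOn (Icc 0 1) f))) := by
  obtain ⟨g, hg, hlim⟩ := hf
  refine (isMeagre_setOf_not_continuousAt (φ := (Icc 0 1).domRestrict f)
    (fun n => (hg n).domRestrict) fun x => hlim x x.2).mono ?_
  rintro x ⟨y, z, hy, hz, hyz⟩ hcont
  have hfx := (continuousWithinAt_iff_continuousAt_domRestrict f x.2).2 hcont
  exact hyz ((eq_of_mem_closure_graphOn hfx (derivedSet_subset_closure _ hy)).trans
    (eq_of_mem_closure_graphOn hfx (derivedSet_subset_closure _ hz)).symm)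

end Necessity

section Sufficiency

lemma isFσ_inter_preimage_Ioo_of_isClosed_Iic {X : Type*} [TopologicalSpace X]
    [PerfectlyNormalSpace X] {s : Set X} {g : X → ℝ} (hg : ∀ c, IsClosed (s ∩ g ⁻¹' Iic c))
    (p q : ℝ) : IsFσ (s ∩ g ⁻¹' Ioo p q) := by
  have : s ∩ g ⁻¹' Ioo p q =
      (⋃ n : ℕ, s ∩ g ⁻¹' Iic (q - 1 / (n + 1))) ∩ (s ∩ g ⁻¹' Iic p)ᶜ := by
    ext x
    simp only [mem_inter_iff, mem_preimage, mem_Ioo, mem_iUnion, mem_Iic, mem_compl_iff, not_and,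
      not_le]
    constructor
    · rintro ⟨hx, hp, hq⟩
      obtain ⟨n, hn⟩ := exists_nat_one_div_lt (sub_pos.2 hq)
      exact ⟨⟨n, hx, by linarith⟩, fun _ => hp⟩
    · rintro ⟨⟨n, hx, hn⟩, hp⟩
      exact ⟨hx, hp hx, hn.trans_lt (sub_lt_self _ Nat.one_div_pos_of_nat)⟩
  rw [this]
  exact (IsFσ.iUnion fun n => (hg _).isFσ).inter (hg p).isOpen_compl.isFσ

lemma IsFσ.diff_of_closure_diff_subset {X : Type*} [TopologicalSpace X] [PerfectlyNormalSpace X]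
    {W A B : Set X} (hW : IsFσ W) (hA : IsClosed A) (hBA : closure B \ B ⊆ A)
    (hdisj : Disjoint (W ∩ A) B) : IsFσ (W \ B) := by
  have : W \ B = W ∩ (closure B)ᶜ ∪ W ∩ A := by
    ext x
    constructor
    · rintro ⟨hxW, hxB⟩
      by_cases hx : x ∈ closure B
      exacts [Or.inr ⟨hxW, hBA ⟨hx, hxB⟩⟩, Or.inl ⟨hxW, hx⟩]
    · rintro (⟨hxW, hx⟩ | hxWA)
      exacts [⟨hxW, fun h => hx (subset_closure h)⟩, ⟨hxWA.1, disjoint_left.1 hdisj hxWA⟩]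
  rw [this]
  exact (hW.inter isClosed_closure.isOpen_compl.isFσ).union (hW.inter hA.isFσ)

lemma exists_seq_forall_mapClusterPt (X : Type*) [TopologicalSpace X]
    [TopologicalSpace.SeparableSpace X] [Nonempty X] :
    ∃ q : ℕ → X, ∀ x, MapClusterPt x atTop q := by
  obtain ⟨u, hu⟩ := TopologicalSpace.exists_dense_seq X
  refine ⟨fun n => u n.unpair.1, fun x => mapClusterPt_iff_frequently.2 fun s hs =>
    frequently_atTop.2 fun N => ?_⟩
  obtain ⟨k, hk⟩ := hu.exists_mem_open (s := interior s) isOpen_interior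
    ⟨x, mem_interior_iff_mem_nhds.2 hs⟩
  exact ⟨Nat.pair k N, Nat.right_le_pair k N, by simpa using interior_subset hk⟩

lemma exists_injective_forall_mem {α : Type*} {s : ℕ → Set α} (hs : ∀ n, (s n).Infinite) :
    ∃ x : ℕ → α, Injective x ∧ ∀ n, x n ∈ s n := by
  classical
  choose g hgs hgt using fun n (t : Finset α) => (hs n).exists_notMem_finset t
  let F : ℕ → Finset α := fun n => Nat.rec ∅ (fun n Fn => insert (g n Fn) Fn) n
  have hFmono : Monotone F := monotone_nat_of_le_succ fun n => Finset.subset_insert _ _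
  have hF : ∀ m n, m < n → g m (F m) ∈ F n := fun m n hmn =>
    hFmono (Nat.succ_le_of_lt hmn) (Finset.mem_insert_self _ _)
  refine ⟨fun n => g n (F n), fun m n (hmn : g m (F m) = g n (F n)) => ?_, fun n => hgs n _⟩
  rcases lt_trichotomy m n with h | h | h
  · exact absurd (hmn ▸ hF m n h) (hgt n (F n))
  · exact h
  · exact absurd (hmn.symm ▸ hF n m h) (hgt m (F m))

lemma exists_injective_seq_near_notMem {X : Type*} [MetricSpace X] [BaireSpace X]
    [PerfectSpace X]
    {C : Set X} (hC : IsMeagre C) (a : ℕ → X) :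
    ∃ p : ℕ → X, Injective p ∧ ∀ n, p n ∉ C ∧ dist (p n) (a n) < 1 / (n + 1) := by
  obtain ⟨p, hp, hps⟩ := exists_injective_forall_mem fun n =>
    (isOpen_ball (x := a n) (ε := 1 / (n + 1))).infinite_diff_of_isMeagre
      (nonempty_ball.2 Nat.one_div_pos_of_nat) hC
  exact ⟨p, hp, fun n => ⟨(hps n).2, (hps n).1⟩⟩

def lowerEnvelope (T : Set (ℝ × ℝ)) (x : ℝ) : ℝ :=
  sInf {y | (x, y) ∈ T}

variable {T : Set (ℝ × ℝ)} {x y : ℝ}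

lemma bddBelow_fiber (hT : IsCompact T) (x : ℝ) : BddBelow {y | (x, y) ∈ T} :=
  (hT.image continuous_snd).bddBelow.mono fun _ hy => mem_image_of_mem Prod.snd hy

lemma lowerEnvelope_le (hT : IsCompact T) (h : (x, y) ∈ T) : lowerEnvelope T x ≤ y :=
  csInf_le (bddBelow_fiber hT x) h

lemma lowerEnvelope_mem (hT : IsCompact T) (h : (x, y) ∈ T) : (x, lowerEnvelope T x) ∈ T :=
  (hT.isClosed.preimage (continuous_const.prodMk continuous_id)).csInf_mem ⟨y, h⟩
    (bddBelow_fiber hT x)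

lemma eq_lowerEnvelope (hT : IsCompact T) (hx : x ∉ nontrivialFibers T) (h : (x, y) ∈ T) :
    y = lowerEnvelope T x := by
  by_contra hne
  exact hx ⟨y, _, h, lowerEnvelope_mem hT h, hne⟩

lemma isClosed_inter_preimage_lowerEnvelope_Iic (hTI : ∀ p ∈ T, p.1 ∈ Icc (0:ℝ) 1)
    (hT : IsCompact T) (hsec : ∀ x ∈ Icc (0:ℝ) 1, ∃ y, (x, y) ∈ T) (c : ℝ) :
    IsClosed (Icc 0 1 ∩ lowerEnvelope T ⁻¹' Iic c) := by
  have : Icc 0 1 ∩ lowerEnvelope T ⁻¹' Iic c = Prod.fst '' (T ∩ Prod.snd ⁻¹' Iic c) := by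
    ext x
    constructor
    · rintro ⟨hx, hxc⟩
      obtain ⟨y, hy⟩ := hsec x hx
      exact ⟨(x, _), ⟨lowerEnvelope_mem hT hy, hxc⟩, rfl⟩
    · rintro ⟨⟨x, y⟩, ⟨hy, hyc⟩, rfl⟩
      exact ⟨hTI _ hy, (lowerEnvelope_le hT hy).trans hyc⟩
  rw [this]
  exact ((hT.inter_right (isClosed_Iic.preimage continuous_snd)).image continuous_fst).isClosed

def perturbedEnvelope (T : Set (ℝ × ℝ)) (pts : ℕ → ℝ) (q : ℕ → ℝ × ℝ) : ℝ → ℝ :=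
  Function.extend pts (fun n => (q n).2) (lowerEnvelope T)

variable {pts : ℕ → ℝ} {q : ℕ → ℝ × ℝ}

lemma perturbedEnvelope_apply_pts (hpts : Injective pts) (n : ℕ) :
    perturbedEnvelope T pts q (pts n) = (q n).2 :=
  hpts.extend_apply _ _ n

lemma perturbedEnvelope_of_notMem (hx : x ∉ range pts) :
    perturbedEnvelope T pts q x = lowerEnvelope T x :=
  extend_apply' _ _ _ fun ⟨n, hn⟩ => hx ⟨n, hn⟩

lemma graphOn_perturbedEnvelope_subset (hT : IsCompact T)
    (hsec : ∀ x ∈ Icc (0:ℝ) 1, ∃ y, (x, y) ∈ T) (hpts : Injective pts) :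
    graphOn (Icc 0 1) (perturbedEnvelope T pts q) ⊆ T ∪ range fun n => (pts n, (q n).2) := by
  rintro ⟨x, y⟩ ⟨hx, hy⟩
  dsimp only at hx hy
  subst hy
  by_cases hxr : x ∈ range pts
  · obtain ⟨n, rfl⟩ := hxr
    exact Or.inr ⟨n, by rw [perturbedEnvelope_apply_pts hpts]⟩
  · obtain ⟨y, hy⟩ := hsec x hx
    rw [perturbedEnvelope_of_notMem hxr]
    exact Or.inl (lowerEnvelope_mem hT hy)

lemma range_subset_graphOn_perturbedEnvelope (hpts : Injective pts)
    (hptsI : ∀ n, pts n ∈ Icc (0:ℝ) 1) :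
    range (fun n => (pts n, (q n).2)) ⊆ graphOn (Icc 0 1) (perturbedEnvelope T pts q) := by
  rintro _ ⟨n, rfl⟩
  exact ⟨hptsI n, (perturbedEnvelope_apply_pts hpts n).symm⟩

lemma image_perturbedEnvelope_subset (hT : IsCompact T)
    (hsec : ∀ x ∈ Icc (0:ℝ) 1, ∃ y, (x, y) ∈ T) (hpts : Injective pts) (hq : ∀ n, q n ∈ T) :
    perturbedEnvelope T pts q '' Icc 0 1 ⊆ Prod.snd '' T := by
  rintro _ ⟨x, hx, rfl⟩
  rcases graphOn_perturbedEnvelope_subset hT hsec hpts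
    (show (x, perturbedEnvelope T pts q x) ∈ graphOn (Icc 0 1) (perturbedEnvelope T pts q)
      from ⟨hx, rfl⟩) with h | ⟨n, hn⟩
  · exact ⟨_, h, rfl⟩
  · exact ⟨q n, hq n, congrArg Prod.snd hn⟩

lemma accPts_graphOn_perturbedEnvelope (hT : IsCompact T)
    (hsec : ∀ x ∈ Icc (0:ℝ) 1, ∃ y, (x, y) ∈ T) (hpts : Injective pts)
    (hptsI : ∀ n, pts n ∈ Icc (0:ℝ) 1) (hq : ∀ n, q n ∈ T)
    (hclose : Tendsto (fun n => dist (pts n) (q n).1) atTop (𝓝 0))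
    (hclust : ∀ t ∈ T, MapClusterPt t atTop q) :
    accPts (graphOn (Icc 0 1) (perturbedEnvelope T pts q)) = T := by
  have hPq : Tendsto (fun n => dist (pts n, (q n).2) (q n)) atTop (𝓝 0) := by
    simpa only [Prod.dist_eq, dist_self, max_eq_left dist_nonneg] using hclose
  refine ((derivedSet_mono _ _ (graphOn_perturbedEnvelope_subset hT hsec hpts)).trans ?_).antisymm
    fun t ht => ?_
  · rw [derivedSet_union]
    exact union_subset ((isClosed_iff_derivedSet_subset _).1 hT.isClosed)
      (derivedSet_range_subset_of_tendsto_dist hT.isClosed hq (Nat.cofinite_eq_atTop ▸ hPq))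
  · exact (accPt_range_of_mapClusterPt (hclust t ht) hPq fun m n h =>
      hpts (congrArg Prod.fst h)).mono
      (principal_mono.2 (range_subset_graphOn_perturbedEnvelope hpts hptsI))

lemma inter_preimage_perturbedEnvelope (hpts : Injective pts) (hptsI : ∀ n, pts n ∈ Icc (0:ℝ) 1)
    (U : Set ℝ) : Icc 0 1 ∩ perturbedEnvelope T pts q ⁻¹' U =
      (Icc 0 1 ∩ lowerEnvelope T ⁻¹' U) \ range (fun n : {n // (q n).2 ∉ U} => pts n) ∪
        range (fun n : {n // (q n).2 ∈ U} => pts n) := by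
  ext x
  by_cases hxr : x ∈ range pts
  · obtain ⟨n, rfl⟩ := hxr
    simp only [mem_inter_iff, mem_preimage, perturbedEnvelope_apply_pts hpts, mem_union,
      Set.mem_sdiff, mem_range, hpts.eq_iff, Subtype.exists, exists_prop, exists_eq_right,
      hptsI n, true_and]
    tauto
  · have hB : ∀ P : ℕ → Prop, x ∉ range (fun n : {n // P n} => pts n) :=
      fun P ⟨n, hn⟩ => hxr ⟨n, hn⟩
    simp only [mem_inter_iff, mem_preimage, perturbedEnvelope_of_notMem hxr, mem_union,
      Set.mem_sdiff, hB, not_false_eq_true, and_true, or_false]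

lemma isFσ_inter_preimage_perturbedEnvelope (hTI : ∀ p ∈ T, p.1 ∈ Icc (0:ℝ) 1) (hT : IsCompact T)
    (hsec : ∀ x ∈ Icc (0:ℝ) 1, ∃ y, (x, y) ∈ T) (hpts : Injective pts)
    (hptsI : ∀ n, pts n ∈ Icc (0:ℝ) 1) (hptsD : ∀ n, pts n ∉ nontrivialFibers T)
    (hq : ∀ n, q n ∈ T) (hclose : Tendsto (fun n => dist (pts n) (q n).1) atTop (𝓝 0))
    (a b : ℝ) : IsFσ (Icc 0 1 ∩ perturbedEnvelope T pts q ⁻¹' Ioo a b) := by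
  set U := Ioo a b
  set B := range fun n : {n // (q n).2 ∉ U} => pts n
  let A := Prod.fst '' (T ∩ Prod.snd ⁻¹' Uᶜ)
  have hA : IsClosed A := ((hT.inter_right (isOpen_Ioo.isClosed_compl.preimage
    continuous_snd)).image continuous_fst).isClosed
  have hBA : closure B \ B ⊆ A := by
    rw [closure_eq_self_union_derivedSet, union_sdiff_left]
    exact sdiff_subset.trans (derivedSet_range_subset_of_tendsto_dist hA
      (q := fun n : {n // (q n).2 ∉ U} => (q n).1) (fun n => ⟨q n, ⟨hq n, n.2⟩, rfl⟩)
      ((Nat.cofinite_eq_atTop ▸ hclose).comp Subtype.val_injective.tendsto_cofinite))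
  have hdisj : Disjoint ((Icc 0 1 ∩ lowerEnvelope T ⁻¹' U) ∩ A) B := by
    rw [disjoint_left]
    rintro _ ⟨⟨-, hmU⟩, ⟨⟨x, y⟩, ⟨hxy, hyU⟩, rfl⟩⟩ ⟨n, hn : pts n = x⟩
    exact hyU (eq_lowerEnvelope hT (hn ▸ hptsD n) hxy ▸ hmU)
  rw [inter_preimage_perturbedEnvelope hpts hptsI]
  exact (IsFσ.diff_of_closure_diff_subset (isFσ_inter_preimage_Ioo_of_isClosed_Iic
    (isClosed_inter_preimage_lowerEnvelope_Iic hTI hT hsec) a b) hA hBA hdisj).union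
    (countable_range _).isFσ

theorem exists_baire1_accPts_graphOn_eq (hTI : ∀ p ∈ T, p.1 ∈ Icc (0:ℝ) 1) (hT : IsCompact T)
    (hsec : ∀ x ∈ Icc (0:ℝ) 1, ∃ y, (x, y) ∈ T) (hD : MeagreIn01 (nontrivialFibers T)) :
    ∃ f : ℝ → ℝ, Baire1 f ∧ (∃ M, ∀ x ∈ Icc (0:ℝ) 1, |f x| ≤ M) ∧
      accPts (graphOn (Icc 0 1) f) = T := by
  obtain ⟨y₀, hy₀⟩ := hsec 0 ⟨le_rfl, zero_le_one⟩
  have : Nonempty T := ⟨⟨_, hy₀⟩⟩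
  obtain ⟨q, hq⟩ := exists_seq_forall_mapClusterPt T
  obtain ⟨p, hpinj, hp⟩ := exists_injective_seq_near_notMem hD
    fun n => (⟨(q n : ℝ × ℝ).1, hTI _ (q n).2⟩ : Icc (0:ℝ) 1)
  have hclose : Tendsto (fun n => dist (p n : ℝ) (q n : ℝ × ℝ).1) atTop (𝓝 0) :=
    squeeze_zero (fun _ => dist_nonneg) (fun n => (hp n).2.le)
      tendsto_one_div_add_atTop_nhds_zero_nat
  have hpinj' : Injective fun n => (p n : ℝ) := Subtype.val_injective.comp hpinj
  set f := perturbedEnvelope T (fun n => (p n : ℝ)) fun n => q n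
  have hbdd : Bornology.IsBounded (f '' Icc 0 1) := (hT.image continuous_snd).isBounded.subset
    (image_perturbedEnvelope_subset hT hsec hpinj' fun n => (q n).2)
  obtain ⟨M, hM⟩ := isBounded_iff_forall_norm_le.1 hbdd
  refine ⟨f, baire1_of_isFσ_preimage hbdd (isFσ_inter_preimage_perturbedEnvelope hTI hT hsec
    hpinj' (fun n => (p n).2) (fun n => (hp n).1) (fun n => (q n).2) hclose),
    ⟨M, fun x hx => hM _ (mem_image_of_mem f hx)⟩, ?_⟩
  exact accPts_graphOn_perturbedEnvelope hT hsec hpinj' (fun n => (p n).2) (fun n => (q n).2)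
    hclose fun t ht => (hq ⟨t, ht⟩).continuousAt_comp continuous_subtype_val.continuousAt

end Sufficiency

theorem stmt14 (T : Set (ℝ × ℝ)) (hT : ∀ p ∈ T, p.1 ∈ Icc (0:ℝ) 1) :
    (∃ f : ℝ → ℝ, Baire1 f ∧ (∃ M, ∀ x ∈ Icc (0:ℝ) 1, |f x| ≤ M) ∧
        accPts (graphOn (Icc 0 1) f) = T) ↔
      (IsCompact T ∧ (∀ x ∈ Icc (0:ℝ) 1, ∃ y, (x, y) ∈ T) ∧
        MeagreIn01 {x : ℝ | ∃ y z : ℝ, (x, y) ∈ T ∧ (x, z) ∈ T ∧ y ≠ z}) := by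
  constructor
  · rintro ⟨f, hf, ⟨M, hM⟩, rfl⟩
    have hbdd : Bornology.IsBounded (f '' Icc 0 1) :=
      isBounded_iff_forall_norm_le.2 ⟨M, by rintro _ ⟨x, hx, rfl⟩; exact hM x hx⟩
    exact ⟨isCompact_accPts_graphOn hbdd, fun x hx => exists_mem_accPts_graphOn hbdd hx,
      meagreIn01_nontrivialFibers_accPts hf⟩
  · rintro ⟨hTc, hsec, hD⟩
    exact exists_baire1_accPts_graphOn_eq hT hTc hsec hD
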